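/- Let f_1, ..., f_N : ℝ^n → ℝ be twice continuously differentiable with symmetric Hessians whose eigenvalues all lie in [μ, L], 0 < μ ≤ L; let W be a real symmetric doubly stochastic N × N matrix with smallest eigenvalue λ_min(W); let α > 0; and suppose ζ'' = max{|1 − αμ|, |λ_min(W) − αL|} < 1. Then the distributed gradient descent map T(z)_i = ∑_j W_{ij} z_j − α∇f_i(z_i) has a unique fixed point x̄ ∈ (ℝ^n)^N, and the iterates z_{k+1} = T(z_k) satisfy ‖z_k − x̄‖ ≤ (ζ'')^k ‖z_0 − x̄‖ for every k ≥ 0. -/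

import Mathlib

/-!
The Jacobian of the DGD map at `x` is `J = W ⊗ I - α · diag(∇²fᵢ(xᵢ))`, a symmetric operator.
Its quadratic form is squeezed between `(λ_min(W) - αL)‖v‖²` and `(1 - αμ)‖v‖²`: the lower bound
because `W - λ_min(W) • 1` is positive semidefinite, hence so is its Hadamard product with the Gram
matrix of the blocks `vᵢ` (Schur), and the upper bound because a doubly stochastic `W` satisfies
`Σ Wᵢⱼ ⟪vᵢ, vⱼ⟫ ≤ Σ ‖vᵢ‖²`. For a symmetric operator this bounds `‖J‖` by `ζ''`, so by the mean
value inequality the DGD map is a `ζ''`-contraction and Banach's fixed point theorem applies.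
-/

open scoped RealInnerProductSpace NNReal
open Matrix Function

section QuadraticForms

variable {ι E : Type*} [Fintype ι] [NormedAddCommGroup E] [InnerProductSpace ℝ E]

theorem Matrix.IsHermitian.posSemidef_sub_smul_one [DecidableEq ι] {W : Matrix ι ι ℝ}
    (hW : W.IsHermitian) {c : ℝ} (hc : ∀ i, c ≤ hW.eigenvalues i) : (W - c • 1).PosSemidef := by
  have hscalar : (c • 1 : Matrix ι ι ℝ) =
      Unitary.conjStarAlgAut ℝ _ hW.eigenvectorUnitary (c • 1) := by
    simp
  rw [hW.spectral_theorem, hscalar, ← map_sub, Unitary.conjStarAlgAut_apply,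
    Unitary.isUnit_coe.posSemidef_star_right_conjugate_iff, smul_one_eq_diagonal, diagonal_sub,
    posSemidef_diagonal_iff]
  simpa [sub_nonneg] using hc

theorem Matrix.PosSemidef.sum_mul_inner_nonneg {M : Matrix ι ι ℝ} (hM : M.PosSemidef)
    (v : ι → E) : 0 ≤ ∑ i, ∑ j, M i j * ⟪v i, v j⟫ := by
  simpa [dotProduct, mulVec, Finset.mul_sum, gram_apply] using
    (hM.hadamard (posSemidef_gram ℝ v)).dotProduct_mulVec_nonneg 1

theorem Matrix.IsHermitian.mul_sum_norm_sq_le_sum_mul_inner [DecidableEq ι] {W : Matrix ι ι ℝ}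
    (hW : W.IsHermitian) {c : ℝ} (hc : ∀ i, c ≤ hW.eigenvalues i) (v : ι → E) :
    c * ∑ i, ‖v i‖ ^ 2 ≤ ∑ i, ∑ j, W i j * ⟪v i, v j⟫ := by
  have hpsd := (hW.posSemidef_sub_smul_one hc).sum_mul_inner_nonneg v
  simp only [sub_apply, smul_apply, one_apply, smul_eq_mul, sub_mul, Finset.sum_sub_distrib,
    mul_ite, mul_one, mul_zero, ite_mul, zero_mul, Finset.sum_ite_eq, Finset.mem_univ,
    if_true, real_inner_self_eq_norm_sq] at hpsd
  rw [Finset.mul_sum]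
  linarith

theorem Matrix.sum_mul_inner_le_sum_norm_sq {W : Matrix ι ι ℝ} (hnn : ∀ i j, 0 ≤ W i j)
    (hrow : ∀ i, ∑ j, W i j = 1) (hcol : ∀ j, ∑ i, W i j = 1) (v : ι → E) :
    ∑ i, ∑ j, W i j * ⟪v i, v j⟫ ≤ ∑ i, ‖v i‖ ^ 2 := by
  have hterm i j : W i j * ⟪v i, v j⟫ ≤ (W i j * ‖v i‖ ^ 2 + W i j * ‖v j‖ ^ 2) / 2 := by
    have := real_inner_le_norm (v i) (v j)
    nlinarith [hnn i j, two_mul_le_add_sq ‖v i‖ ‖v j‖]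
  have hrows : ∑ i, ∑ j, W i j * ‖v i‖ ^ 2 = ∑ i, ‖v i‖ ^ 2 := by
    simp only [← Finset.sum_mul, hrow, one_mul]
  have hcols : ∑ i, ∑ j, W i j * ‖v j‖ ^ 2 = ∑ j, ‖v j‖ ^ 2 := by
    rw [Finset.sum_comm]
    simp only [← Finset.sum_mul, hcol, one_mul]
  calc ∑ i, ∑ j, W i j * ⟪v i, v j⟫
      ≤ ∑ i, ∑ j, (W i j * ‖v i‖ ^ 2 + W i j * ‖v j‖ ^ 2) / 2 :=
        Finset.sum_le_sum fun i _ => Finset.sum_le_sum fun j _ => hterm i j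
    _ = ∑ i, ‖v i‖ ^ 2 := by
        simp only [← Finset.sum_div, Finset.sum_add_distrib, hrows, hcols]
        ring

end QuadraticForms

theorem ContinuousLinearMap.norm_le_of_abs_inner_self_le {E : Type*} [NormedAddCommGroup E]
    [InnerProductSpace ℝ E] {T : E →L[ℝ] E} (hT : (T : E →ₗ[ℝ] E).IsSymmetric) {M : ℝ}
    (hM : 0 ≤ M) (h : ∀ x, |⟪T x, x⟫| ≤ M * ‖x‖ ^ 2) : ‖T‖ ≤ M := by
  rw [T.norm_eq_iSup_rayleighQuotient hT]
  refine ciSup_le fun x => ?_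
  rcases eq_or_ne x 0 with rfl | hx
  · simpa using hM
  rw [rayleighQuotient, reApplyInnerSelf_apply, RCLike.re_to_real, abs_div, abs_sq,
    div_le_iff₀ (by positivity)]
  exact h x

theorem ContDiff.differentiable_gradient {E : Type*} [NormedAddCommGroup E]
    [InnerProductSpace ℝ E] [CompleteSpace E] {f : E → ℝ} (hf : ContDiff ℝ 2 f) :
    Differentiable ℝ (gradient f) :=
  (InnerProductSpace.toDual ℝ E).symm.differentiable.comp
    ((hf.fderiv_right (m := 1) (by norm_num)).differentiable one_ne_zero)

theorem LipschitzWith.dist_le_pow_mul_of_isFixedPt {X : Type*} [PseudoMetricSpace X] {K : ℝ≥0}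
    {T : X → X} (hT : LipschitzWith K T) {x : X} (hx : IsFixedPt T x) {z : ℕ → X}
    (hz : ∀ k, z (k + 1) = T (z k)) (k : ℕ) : dist (z k) x ≤ K ^ k * dist (z 0) x := by
  induction k with
  | zero => simp
  | succ k ih =>
    calc dist (z (k + 1)) x = dist (T (z k)) (T x) := by rw [hz, hx.eq]
      _ ≤ K * dist (z k) x := hT.dist_le_mul _ _
      _ ≤ K * (K ^ k * dist (z 0) x) := by gcongr
      _ = K ^ (k + 1) * dist (z 0) x := by ring

section DGD

variable {ι E : Type*} [Fintype ι] [NormedAddCommGroup E] [InnerProductSpace ℝ E]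

noncomputable def dgdMap (W : Matrix ι ι ℝ) (α : ℝ) (g : ι → E → E)
    (z : PiLp 2 fun _ : ι => E) : PiLp 2 fun _ : ι => E :=
  WithLp.toLp 2 fun i => ∑ j, W i j • z j - α • g i (z i)

noncomputable def dgdJacobian (W : Matrix ι ι ℝ) (α : ℝ) (H : ι → E →L[ℝ] E) :
    (PiLp 2 fun _ : ι => E) →L[ℝ] PiLp 2 fun _ : ι => E :=
  (PiLp.continuousLinearEquiv 2 ℝ fun _ : ι => E).symm.toContinuousLinearMap ∘L
    ContinuousLinearMap.pi fun i =>
      ∑ j, W i j • PiLp.proj 2 (fun _ : ι => E) j - α • (H i ∘L PiLp.proj 2 (fun _ : ι => E) i)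

variable {W : Matrix ι ι ℝ} {α : ℝ}

@[simp]
theorem dgdJacobian_apply (H : ι → E →L[ℝ] E) (v : PiLp 2 fun _ : ι => E) (i : ι) :
    dgdJacobian W α H v i = ∑ j, W i j • v j - α • H i (v i) := by
  simp [dgdJacobian]

theorem hasFDerivAt_dgdMap {g : ι → E → E} {H : ι → E →L[ℝ] E} {x : PiLp 2 fun _ : ι => E}
    (hg : ∀ i, HasFDerivAt (g i) (H i) (x i)) :
    HasFDerivAt (dgdMap W α g) (dgdJacobian W α H) x := by
  rw [← hasFDerivWithinAt_univ, hasFDerivWithinAt_piLp]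
  intro i
  rw [hasFDerivWithinAt_univ]
  have hmix : HasFDerivAt (fun z : PiLp 2 (fun _ : ι => E) => ∑ j, W i j • z j)
      (∑ j, W i j • PiLp.proj 2 (fun _ : ι => E) j) x :=
    HasFDerivAt.fun_sum fun j _ =>
      (PiLp.hasFDerivAt_apply (𝕜 := ℝ) 2 x j).fun_const_smul (W i j)
  have hlocal : HasFDerivAt (fun z : PiLp 2 (fun _ : ι => E) => g i (z i))
      (H i ∘L PiLp.proj 2 (fun _ : ι => E) i) x :=
    (hg i).comp x (PiLp.hasFDerivAt_apply 2 x i)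
  exact (hmix.sub (hlocal.const_smul α)).congr_fderiv (by ext v; simp)

theorem inner_dgdJacobian_apply (H : ι → E →L[ℝ] E) (u v : PiLp 2 fun _ : ι => E) :
    ⟪dgdJacobian W α H u, v⟫ = ∑ i, ∑ j, W i j * ⟪v i, u j⟫ - α * ∑ i, ⟪H i (u i), v i⟫ := by
  simp only [PiLp.inner_apply, dgdJacobian_apply, inner_sub_left, sum_inner, real_inner_smul_left,
    Finset.sum_sub_distrib, Finset.mul_sum]
  simp only [real_inner_comm (v _) (u _)]

theorem dgdJacobian_isSymmetric (hW : W.IsHermitian) {H : ι → E →L[ℝ] E}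
    (hH : ∀ i, (H i : E →ₗ[ℝ] E).IsSymmetric) :
    (dgdJacobian W α H : (PiLp 2 fun _ : ι => E) →ₗ[ℝ] PiLp 2 fun _ : ι => E).IsSymmetric := by
  intro u v
  simp only [ContinuousLinearMap.coe_coe]
  rw [real_inner_comm _ u, inner_dgdJacobian_apply, inner_dgdJacobian_apply, Finset.sum_comm]
  congr 1
  · refine Finset.sum_congr rfl fun i _ => Finset.sum_congr rfl fun j _ => ?_
    rw [← hW.apply i j, star_trivial, real_inner_comm]
  · congr 1
    exact Finset.sum_congr rfl fun i _ => (hH i (u i) (v i)).trans (real_inner_comm _ _)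

theorem abs_inner_dgdJacobian_self_le [DecidableEq ι] (hW : W.IsHermitian) {c : ℝ}
    (hc : ∀ i, c ≤ hW.eigenvalues i) (hnn : ∀ i j, 0 ≤ W i j) (hrow : ∀ i, ∑ j, W i j = 1)
    (hcol : ∀ j, ∑ i, W i j = 1) (hα : 0 ≤ α) {H : ι → E →L[ℝ] E} {μ L : ℝ}
    (hH : ∀ i v, μ * ‖v‖ ^ 2 ≤ ⟪H i v, v⟫ ∧ ⟪H i v, v⟫ ≤ L * ‖v‖ ^ 2)
    (v : PiLp 2 fun _ : ι => E) :
    |⟪dgdJacobian W α H v, v⟫| ≤ max |1 - α * μ| |c - α * L| * ‖v‖ ^ 2 := by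
  have hmix_lo := hW.mul_sum_norm_sq_le_sum_mul_inner hc v
  have hmix_hi := sum_mul_inner_le_sum_norm_sq hnn hrow hcol v
  have hloc_lo : μ * ∑ i, ‖v i‖ ^ 2 ≤ ∑ i, ⟪H i (v i), v i⟫ := by
    rw [Finset.mul_sum]
    exact Finset.sum_le_sum fun i _ => (hH i (v i)).1
  have hloc_hi : ∑ i, ⟪H i (v i), v i⟫ ≤ L * ∑ i, ‖v i‖ ^ 2 := by
    rw [Finset.mul_sum]
    exact Finset.sum_le_sum fun i _ => (hH i (v i)).2
  have hS : 0 ≤ ∑ i, ‖v i‖ ^ 2 := by positivity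
  have hζ_lo : -max |1 - α * μ| |c - α * L| ≤ c - α * L :=
    (neg_le_neg (le_max_right _ _)).trans (neg_abs_le _)
  have hζ_hi : 1 - α * μ ≤ max |1 - α * μ| |c - α * L| := (le_abs_self _).trans (le_max_left _ _)
  rw [inner_dgdJacobian_apply, PiLp.norm_sq_eq_of_L2, abs_le]
  constructor
  · nlinarith [mul_le_mul_of_nonneg_right hζ_lo hS, mul_le_mul_of_nonneg_left hloc_hi hα]
  · nlinarith [mul_le_mul_of_nonneg_right hζ_hi hS, mul_le_mul_of_nonneg_left hloc_lo hα]

theorem norm_dgdJacobian_le [DecidableEq ι] (hW : W.IsHermitian) {c : ℝ}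
    (hc : ∀ i, c ≤ hW.eigenvalues i) (hnn : ∀ i j, 0 ≤ W i j) (hrow : ∀ i, ∑ j, W i j = 1)
    (hcol : ∀ j, ∑ i, W i j = 1) (hα : 0 ≤ α) {H : ι → E →L[ℝ] E} {μ L : ℝ}
    (hHsym : ∀ i, (H i : E →ₗ[ℝ] E).IsSymmetric)
    (hH : ∀ i v, μ * ‖v‖ ^ 2 ≤ ⟪H i v, v⟫ ∧ ⟪H i v, v⟫ ≤ L * ‖v‖ ^ 2) :
    ‖dgdJacobian W α H‖ ≤ max |1 - α * μ| |c - α * L| :=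
  ContinuousLinearMap.norm_le_of_abs_inner_self_le (dgdJacobian_isSymmetric hW hHsym)
    (le_max_of_le_left (abs_nonneg _))
    (abs_inner_dgdJacobian_self_le hW hc hnn hrow hcol hα hH)

theorem lipschitzWith_dgdMap [DecidableEq ι] (hW : W.IsHermitian) {c : ℝ}
    (hc : ∀ i, c ≤ hW.eigenvalues i) (hnn : ∀ i j, 0 ≤ W i j) (hrow : ∀ i, ∑ j, W i j = 1)
    (hcol : ∀ j, ∑ i, W i j = 1) (hα : 0 ≤ α) {g : ι → E → E} {H : ι → E → E →L[ℝ] E}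
    {μ L : ℝ} (hg : ∀ i x, HasFDerivAt (g i) (H i x) x)
    (hHsym : ∀ i x, (H i x : E →ₗ[ℝ] E).IsSymmetric)
    (hH : ∀ i x v, μ * ‖v‖ ^ 2 ≤ ⟪H i x v, v⟫ ∧ ⟪H i x v, v⟫ ≤ L * ‖v‖ ^ 2) :
    LipschitzWith (max |1 - α * μ| |c - α * L|).toNNReal (dgdMap W α g) := by
  have hderiv (x : PiLp 2 fun _ : ι => E) :
      HasFDerivAt (dgdMap W α g) (dgdJacobian W α fun i => H i (x i)) x :=
    hasFDerivAt_dgdMap fun i => hg i (x i)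
  refine lipschitzWith_of_nnnorm_fderiv_le (fun x => (hderiv x).differentiableAt) fun x => ?_
  rw [(hderiv x).fderiv, Real.le_toNNReal_iff_coe_le (le_max_of_le_left (abs_nonneg _)),
    coe_nnnorm]
  exact norm_dgdJacobian_le hW hc hnn hrow hcol hα (fun i => hHsym i (x i)) (fun i => hH i (x i))

end DGD

theorem stmt5_general {n N : ℕ} [NeZero N]
    (f : Fin N → EuclideanSpace ℝ (Fin n) → ℝ) (μ L α : ℝ)
    (hα : 0 < α)
    (hC2 : ∀ i, ContDiff ℝ 2 (f i))
    (hHsym : ∀ i x u v, ⟪fderiv ℝ (gradient (f i)) x u, v⟫ =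
      ⟪u, fderiv ℝ (gradient (f i)) x v⟫)
    (hHess : ∀ i x v, μ * ‖v‖ ^ 2 ≤ ⟪fderiv ℝ (gradient (f i)) x v, v⟫ ∧
      ⟪fderiv ℝ (gradient (f i)) x v, v⟫ ≤ L * ‖v‖ ^ 2)
    (W : Matrix (Fin N) (Fin N) ℝ) (hW : W.IsHermitian)
    (hWnn : ∀ i j, 0 ≤ W i j)
    (hWrow : ∀ i, ∑ j, W i j = 1)
    (hWcol : ∀ j, ∑ i, W i j = 1)
    (ζ'' : ℝ)
    (hζ'' : ζ'' = max |1 - α * μ|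
      |Finset.univ.inf' Finset.univ_nonempty hW.eigenvalues - α * L|)
    (hζlt : ζ'' < 1)
    (T : (PiLp 2 fun _ : Fin N => EuclideanSpace ℝ (Fin n)) →
      PiLp 2 fun _ : Fin N => EuclideanSpace ℝ (Fin n))
    (hT : ∀ z i, T z i = ∑ j, W i j • z j - α • gradient (f i) (z i)) :
    ∃ xbar, T xbar = xbar ∧ (∀ y, T y = y → y = xbar) ∧
      ∀ z : ℕ → PiLp 2 fun _ : Fin N => EuclideanSpace ℝ (Fin n),
        (∀ k, z (k + 1) = T (z k)) →
          ∀ k, ‖z k - xbar‖ ≤ ζ'' ^ k * ‖z 0 - xbar‖ := by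
  have hζ0 : 0 ≤ ζ'' := hζ'' ▸ le_max_of_le_left (abs_nonneg _)
  have hT_eq : T = dgdMap W α fun i => gradient (f i) := funext fun z => PiLp.ext (hT z)
  have hLip : LipschitzWith ζ''.toNNReal T := hT_eq ▸ hζ'' ▸
    lipschitzWith_dgdMap hW (fun i => Finset.inf'_le _ (Finset.mem_univ i)) hWnn hWrow hWcol
      hα.le (fun i x => ((hC2 i).differentiable_gradient x).hasFDerivAt) hHsym hHess
  have hcontr : ContractingWith ζ''.toNNReal T := ⟨Real.toNNReal_lt_one.2 hζlt, hLip⟩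
  refine ⟨hcontr.fixedPoint, hcontr.fixedPoint_isFixedPt, fun y hy => hcontr.fixedPoint_unique hy,
    fun z hz k => ?_⟩
  simpa [dist_eq_norm, Real.coe_toNNReal _ hζ0] using
    hLip.dist_le_pow_mul_of_isFixedPt hcontr.fixedPoint_isFixedPt hz k

/-- Under the assumptions of Statement 4, if
`ζ'' = max |1 − αμ| |λmin(W) − αL| < 1`, the DGD map `T` has a unique fixed point `x̄` and
the iterates `z_{k+1} = T(z_k)` satisfy `‖z_k − x̄‖ ≤ ζ''^k ‖z_0 − x̄‖`. -/
theorem stmt5 {n N : ℕ} [NeZero N]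
    (f : Fin N → EuclideanSpace ℝ (Fin n) → ℝ) (μ L α : ℝ)
    (hμ : 0 < μ) (hμL : μ ≤ L) (hα : 0 < α)
    (hC2 : ∀ i, ContDiff ℝ 2 (f i))
    (hHsym : ∀ i x u v, ⟪fderiv ℝ (gradient (f i)) x u, v⟫ =
      ⟪u, fderiv ℝ (gradient (f i)) x v⟫)
    (hHess : ∀ i x v, μ * ‖v‖ ^ 2 ≤ ⟪fderiv ℝ (gradient (f i)) x v, v⟫ ∧
      ⟪fderiv ℝ (gradient (f i)) x v, v⟫ ≤ L * ‖v‖ ^ 2)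
    (W : Matrix (Fin N) (Fin N) ℝ) (hW : W.IsHermitian)
    (hWnn : ∀ i j, 0 ≤ W i j)
    (hWrow : ∀ i, ∑ j, W i j = 1)
    (hWcol : ∀ j, ∑ i, W i j = 1)
    (ζ'' : ℝ)
    (hζ'' : ζ'' = max |1 - α * μ|
      |Finset.univ.inf' Finset.univ_nonempty hW.eigenvalues - α * L|)
    (hζlt : ζ'' < 1)
    (T : (PiLp 2 fun _ : Fin N => EuclideanSpace ℝ (Fin n)) →
      PiLp 2 fun _ : Fin N => EuclideanSpace ℝ (Fin n))
    (hT : ∀ z i, T z i = ∑ j, W i j • z j - α • gradient (f i) (z i)) :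
    ∃ xbar, T xbar = xbar ∧ (∀ y, T y = y → y = xbar) ∧
      ∀ z : ℕ → PiLp 2 fun _ : Fin N => EuclideanSpace ℝ (Fin n),
        (∀ k, z (k + 1) = T (z k)) →
          ∀ k, ‖z k - xbar‖ ≤ ζ'' ^ k * ‖z 0 - xbar‖ :=
  stmt5_general f μ L α hα hC2 hHsym hHess W hW hWnn hWrow hWcol ζ'' hζ'' hζlt T hT
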